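/- Unification is complete and most general: if Δ ⊢ θ : Θ ⇒ Θ', A and B both have kind K under Δ,Θ, and θ(A) = θ(B), then unify(Δ, Θ, A, B) succeeds with some result (Θ'', θ'), and there exists θ'' with Δ ⊢ θ'' : Θ'' ⇒ Θ' such that θ = θ'' ∘ θ'. -/

import Mathlib

namespace FreezeML

/-! ### Types, kinds, environments -/

abbrev TVar := ℕ

inductive Kind
  | mono | poly
deriving DecidableEq

/-- System F types: type variables, fully applied constructors, universal types. -/
inductive Ty
  | tvar (a : TVar)
  | con (d : ℕ) (args : List Ty)
  | all (a : TVar) (body : Ty)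
deriving Inhabited

/-- Function types as a distinguished binary constructor. -/
def Ty.arrow (A B : Ty) : Ty := .con 0 [A, B]

/-- Refined kind environments: flexible variables with kinds. -/
abbrev KEnv := List (TVar × Kind)

/-- Type environments. -/
abbrev TEnv := List (ℕ × Ty)

/-- (Finite) type substitutions / instantiations, as association lists;
    identity outside the domain. -/
abbrev Subst := List (TVar × Ty)

/-- View a fixed kind environment (all variables monomorphic) as a refined one. -/
def dk (Δ : List TVar) : KEnv := Δ.map (fun a => (a, Kind.mono))

/-- Free type variables, in order of occurrence. -/
def Ty.ftv : Ty → List TVar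
  | .tvar a => [a]
  | .con _ args => (args.attach.map (fun x => x.1.ftv)).flatten
  | .all a A => A.ftv.filter (fun b => decide (b ≠ a))
  termination_by A => sizeOf A
  decreasing_by
    all_goals simp_wf
    all_goals try (have h := List.sizeOf_lt_of_mem x.2)
    all_goals omega

def lookupSub (θ : Subst) (a : TVar) : Ty :=
  match θ.find? (fun p => p.1 == a) with
  | some p => p.2
  | none => .tvar a

/-- Free type variables of (the range of) a substitution. -/
def ftvSubst (θ : Subst) : List TVar := (θ.map (fun p => p.2.ftv)).flatten

def freshFor (l : List TVar) : TVar := l.foldr max 0 + 1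

/-- Capture-avoiding application of a type substitution. -/
def Ty.applySubst : Ty → Subst → Ty
  | .tvar a, θ => lookupSub θ a
  | .con d args, θ => .con d (args.attach.map (fun x => x.1.applySubst θ))
  | .all a A, θ =>
      let c := freshFor (ftvSubst θ ++ A.ftv ++ [a])
      .all c (A.applySubst ((a, .tvar c) :: θ))
  termination_by A _ => sizeOf A
  decreasing_by
    all_goals simp_wf
    all_goals try (have h := List.sizeOf_lt_of_mem x.2)
    all_goals omega

/-- Composition of substitutions: `apply (comp θ θ') = apply θ ∘ apply θ'`. -/
def compSubst (θ θ' : Subst) : Subst :=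
  θ'.map (fun p => (p.1, p.2.applySubst θ)) ++ θ

def removeSub (θ : Subst) (a : TVar) : Subst := θ.filter (fun p => p.1 != a)

def substEnv (θ : Subst) (Γ : TEnv) : TEnv := Γ.map (fun p => (p.1, p.2.applySubst θ))

def envFtv (Γ : TEnv) : List TVar := (Γ.map (fun p => p.2.ftv)).flatten

def lookupEnv (Γ : TEnv) (x : ℕ) : Option Ty :=
  (Γ.find? (fun p => p.1 == x)).map (fun p => p.2)

/-- Prefix of top-level quantifiers and the guarded body of a type. -/
def Ty.splitAll : Ty → List TVar × Ty
  | .all a A => let p := A.splitAll; (a :: p.1, p.2)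
  | A => ([], A)

def mkAll (Δ : List TVar) (A : Ty) : Ty := Δ.foldr Ty.all A

/-- Syntactic monotypes (no quantifier anywhere). -/
def Ty.isMonoB : Ty → Bool
  | .tvar _ => true
  | .con _ args => args.attach.all (fun x => x.1.isMonoB)
  | .all _ _ => false
  termination_by A => sizeOf A
  decreasing_by
    all_goals simp_wf
    all_goals try (have h := List.sizeOf_lt_of_mem x.2)
    all_goals omega

/-- The list `l` minus the elements of `d`, deduplicated. -/
def listDiff (l d : List TVar) : List TVar :=
  (l.filter (fun a => decide (a ∉ d))).dedup

/-! ### Kinding -/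

/-- Kinding judgement `E ⊢ A : K` over a refined kind environment. -/
inductive HasKind : KEnv → Ty → Kind → Prop
  | var {E a K} : (a, K) ∈ E → HasKind E (.tvar a) K
  | con {E d args K} : (∀ A ∈ args, HasKind E A K) → HasKind E (.con d args) K
  | all {E a A} : HasKind ((a, Kind.mono) :: E) A .poly → HasKind E (.all a A) .poly
  | up {E A} : HasKind E A .mono → HasKind E A .poly

/-- Well-formedness of a substitution: `Δ ⊢ θ : Θ ⇒ Θ'`. -/
def SubstWF (Δ : List TVar) (θ : Subst) (Θ Θ' : KEnv) : Prop :=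
  (∀ p ∈ Θ, HasKind (dk Δ ++ Θ') (lookupSub θ p.1) p.2) ∧
  (∀ a ∈ Δ, lookupSub θ a = .tvar a)

/-- Type instantiation judgement `E ⊢ δ : Δ' ⇒_K Δ''`. -/
def InstWF (E : KEnv) (δ : Subst) (Δ' : List TVar) (K : Kind) (Δ'' : List TVar) : Prop :=
  (∀ a ∈ Δ', HasKind (E ++ dk Δ'') (lookupSub δ a) K) ∧
  (∀ p ∈ E, lookupSub δ p.1 = .tvar p.1)

/-- Well-formedness of a type environment: every type has kind ★ and
    all its free type variables are monomorphic. -/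
def EnvWF (E : KEnv) (Γ : TEnv) : Prop :=
  ∀ p ∈ Γ, HasKind E p.2 Kind.poly ∧ ∀ a ∈ p.2.ftv, (a, Kind.mono) ∈ E

/-! ### Alpha-equivalence -/

/-- Alpha-equivalence of types. -/
inductive Aeq : Ty → Ty → Prop
  | var (a : TVar) : Aeq (.tvar a) (.tvar a)
  | con {d args₁ args₂} : args₁.length = args₂.length →
      (∀ p ∈ args₁.zip args₂, Aeq p.1 p.2) → Aeq (.con d args₁) (.con d args₂)
  | all {a b A B} (c : TVar) : c ∉ A.ftv → c ∉ B.ftv →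
      Aeq (A.applySubst [(a, .tvar c)]) (B.applySubst [(b, .tvar c)]) →
      Aeq (.all a A) (.all b B)

/-! ### FreezeML terms -/

inductive Tm
  | var (x : ℕ)
  | freeze (x : ℕ)
  | lam (x : ℕ) (M : Tm)
  | alam (x : ℕ) (A : Ty) (M : Tm)
  | app (M N : Tm)
  | lett (x : ℕ) (M N : Tm)
  | alet (x : ℕ) (A : Ty) (M N : Tm)

/-- Values. -/
def Tm.isVal : Tm → Bool
  | .var _ => true
  | .freeze _ => true
  | .lam _ _ => true
  | .alam _ _ _ => true
  | .app _ _ => false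
  | .lett _ M N => M.isVal && N.isVal
  | .alet _ _ M N => M.isVal && N.isVal

/-- Guarded values. -/
def Tm.isGVal : Tm → Bool
  | .var _ => true
  | .freeze _ => false
  | .lam _ _ => true
  | .alam _ _ _ => true
  | .app _ _ => false
  | .lett _ M N => M.isVal && N.isGVal
  | .alet _ _ M N => M.isVal && N.isGVal

/-- `gen`: the generalisable type variables of `A` relative to `E`, paired as in the paper. -/
def genVars (E : KEnv) (A : Ty) (M : Tm) : List TVar × List TVar :=
  let Δ' := listDiff A.ftv (E.map Prod.fst)
  if M.isGVal then (Δ', Δ') else ([], Δ')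

/-- The `⇕` judgement: generalise guarded values, monomorphically instantiate non-values. -/
def Updown (E : KEnv) (Δ'' : List TVar) (M : Tm) (A' A : Ty) : Prop :=
  if M.isGVal then A = mkAll Δ'' A'
  else ∃ δ, InstWF E δ Δ'' Kind.mono [] ∧ A = A'.applySubst δ

/-- `split`: split a let-annotation depending on whether the bound term is a guarded value. -/
def splitTy (A : Ty) (M : Tm) : List TVar × Ty :=
  if M.isGVal then A.splitAll else ([], A)

/-! ### FreezeML typing (via the well-founded `J` function) -/

/-- Principality relative to a given typing set. -/
def PrincipalOn (X : Set (KEnv × TEnv × Ty)) (E : KEnv) (Γ : TEnv)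
    (Δ' : List TVar) (A' : Ty) : Prop :=
  Δ' = listDiff A'.ftv (E.map Prod.fst) ∧
  (E ++ dk Δ', Γ, A') ∈ X ∧
  ∀ Δ'' A'', Δ'' = listDiff A''.ftv (E.map Prod.fst) →
    (E ++ dk Δ'', Γ, A'') ∈ X →
    ∃ δ, InstWF E δ Δ' Kind.poly Δ'' ∧ A'.applySubst δ = A''

/-- The set of valid typing triples `(E, Γ, A)` of a term,
    defined by recursion on the term. -/
def TypingJ : Tm → Set (KEnv × TEnv × Ty)
  | .freeze x => {p | lookupEnv p.2.1 x = some p.2.2 ∧ EnvWF p.1 p.2.1 ∧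
      HasKind p.1 p.2.2 Kind.poly}
  | .var x => {p | ∃ A₀ δ, lookupEnv p.2.1 x = some A₀ ∧
      InstWF p.1 δ A₀.splitAll.1 Kind.poly [] ∧
      p.2.2 = A₀.splitAll.2.applySubst δ ∧
      EnvWF p.1 p.2.1 ∧ HasKind p.1 p.2.2 Kind.poly}
  | .lam x M => {p | ∃ S B, p.2.2 = Ty.arrow S B ∧ S.isMonoB ∧
      (p.1, (x, S) :: p.2.1, B) ∈ TypingJ M}
  | .alam x A M => {p | ∃ B, p.2.2 = Ty.arrow A B ∧
      (p.1, (x, A) :: p.2.1, B) ∈ TypingJ M}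
  | .app M N => {p | ∃ A, (p.1, p.2.1, Ty.arrow A p.2.2) ∈ TypingJ M ∧
      (p.1, p.2.1, A) ∈ TypingJ N}
  | .lett x M N => {p | ∃ A' A,
      Updown p.1 (listDiff A'.ftv (p.1.map Prod.fst)) M A' A ∧
      PrincipalOn (TypingJ M) p.1 p.2.1 (listDiff A'.ftv (p.1.map Prod.fst)) A' ∧
      (p.1, (x, A) :: p.2.1, p.2.2) ∈ TypingJ N}
  | .alet x A M N => {p |
      (p.1 ++ dk (splitTy A M).1, p.2.1, (splitTy A M).2) ∈ TypingJ M ∧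
      (p.1, (x, A) :: p.2.1, p.2.2) ∈ TypingJ N}

/-- The FreezeML typing relation. -/
def FzTyping (E : KEnv) (Γ : TEnv) (M : Tm) (A : Ty) : Prop :=
  (E, Γ, A) ∈ TypingJ M

/-- The principality predicate of the paper. -/
def Principal (E : KEnv) (Γ : TEnv) (M : Tm) (Δ' : List TVar) (A' : Ty) : Prop :=
  PrincipalOn (TypingJ M) E Γ Δ' A'

/-- Well-scopedness of terms: all annotations are well-kinded. -/
inductive TermWF : List TVar → Tm → Prop
  | var {Δ x} : TermWF Δ (.var x)
  | freeze {Δ x} : TermWF Δ (.freeze x)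
  | lam {Δ x M} : TermWF Δ M → TermWF Δ (.lam x M)
  | alam {Δ x A M} : HasKind (dk Δ) A Kind.poly → TermWF Δ M → TermWF Δ (.alam x A M)
  | app {Δ M N} : TermWF Δ M → TermWF Δ N → TermWF Δ (.app M N)
  | lett {Δ x M N} : TermWF Δ M → TermWF Δ N → TermWF Δ (.lett x M N)
  | alet {Δ x A M N} : HasKind (dk Δ) A Kind.poly →
      TermWF (Δ ++ (splitTy A M).1) M → TermWF Δ N → TermWF Δ (.alet x A M N)

/-! ### Demotion and unification -/

/-- Demote to kind • all variables of `Θ` occurring in `Δ'` (no-op for ★). -/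
def demote (K : Kind) (Θ : KEnv) (Δ' : List TVar) : KEnv :=
  match K with
  | .poly => Θ
  | .mono => Θ.map (fun p => if p.1 ∈ Δ' then (p.1, Kind.mono) else p)

/-- Remove a flexible variable from a refined kind environment, returning its kind. -/
def removeK : KEnv → TVar → Option (Kind × KEnv)
  | [], _ => none
  | p :: Θ, a =>
      if p.1 = a then some (p.2, Θ)
      else (removeK Θ a).map (fun q => (q.1, p :: q.2))

mutual
/-- Big-step relation of the unification algorithm:
    `UnifyRel Δ Θ A B Θ' θ` holds iff `unify(Δ, Θ, A, B)` succeeds with result `(Θ', θ)`. -/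
inductive UnifyRel : List TVar → KEnv → Ty → Ty → KEnv → Subst → Prop
  | refl {Δ Θ a} : UnifyRel Δ Θ (.tvar a) (.tvar a) Θ []
  | flexL {Δ Θ a A K Θ₀ Θ₁} : A ≠ .tvar a →
      removeK Θ a = some (K, Θ₀) →
      Θ₁ = demote K Θ₀ (listDiff A.ftv Δ) →
      HasKind (dk Δ ++ Θ₁) A K →
      UnifyRel Δ Θ (.tvar a) A Θ₁ [(a, A)]
  | flexR {Δ Θ a A K Θ₀ Θ₁} : A ≠ .tvar a →
      removeK Θ a = some (K, Θ₀) →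
      Θ₁ = demote K Θ₀ (listDiff A.ftv Δ) →
      HasKind (dk Δ ++ Θ₁) A K →
      UnifyRel Δ Θ A (.tvar a) Θ₁ [(a, A)]
  | con {Δ Θ d args₁ args₂ Θ' θ} :
      UnifyList Δ Θ args₁ args₂ Θ' θ →
      UnifyRel Δ Θ (.con d args₁) (.con d args₂) Θ' θ
  | all {Δ Θ a b A B Θ' θ} (c : TVar) :
      c ∉ Δ → c ∉ Θ.map Prod.fst →
      c ∉ (Ty.all a A).ftv → c ∉ (Ty.all b B).ftv →
      UnifyRel (c :: Δ) Θ (A.applySubst [(a, .tvar c)]) (B.applySubst [(b, .tvar c)]) Θ' θ →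
      c ∉ ftvSubst θ →
      UnifyRel Δ Θ (.all a A) (.all b B) Θ' θ

/-- Componentwise unification of argument lists, threading substitutions. -/
inductive UnifyList : List TVar → KEnv → List Ty → List Ty → KEnv → Subst → Prop
  | nil {Δ Θ} : UnifyList Δ Θ [] [] Θ []
  | cons {Δ Θ A B As Bs Θ₁ θ₁ Θ₂ θ₂} :
      UnifyRel Δ Θ A B Θ₁ θ₁ →
      UnifyList Δ Θ₁ (As.map (fun C => C.applySubst θ₁)) (Bs.map (fun C => C.applySubst θ₁)) Θ₂ θ₂ →
      UnifyList Δ Θ (A :: As) (B :: Bs) Θ₂ (compSubst θ₂ θ₁)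
end

/-! ### The type inference algorithm (as a big-step relation) -/

def removeVars (Θ : KEnv) (l : List TVar) : KEnv :=
  Θ.filter (fun p => !(l.contains p.1))

/-- Big-step relation of the inference algorithm:
    `InferRel Δ Θ Γ M Θ' θ A` holds iff `infer(Δ, Θ, Γ, M)` succeeds with `(Θ', θ, A)`. -/
inductive InferRel : List TVar → KEnv → TEnv → Tm → KEnv → Subst → Ty → Prop
  | freeze {Δ Θ Γ x A} : lookupEnv Γ x = some A →
      InferRel Δ Θ Γ (.freeze x) Θ [] A
  | var {Δ Θ Γ x A₀ as H} (bs : List TVar) :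
      lookupEnv Γ x = some A₀ → A₀.splitAll = (as, H) →
      bs.length = as.length → bs.Nodup →
      (∀ b ∈ bs, b ∉ Δ ∧ b ∉ Θ.map Prod.fst ∧ b ∉ A₀.ftv ∧ b ∉ envFtv Γ) →
      InferRel Δ Θ Γ (.var x) (Θ ++ bs.map (fun b => (b, Kind.poly))) []
        (H.applySubst (as.zip (bs.map Ty.tvar)))
  | lam {Δ Θ Γ x M Θ₁ θ₁ B S} (a : TVar) :
      a ∉ Δ → a ∉ Θ.map Prod.fst → a ∉ envFtv Γ →
      InferRel Δ (Θ ++ [(a, Kind.mono)]) ((x, .tvar a) :: Γ) M Θ₁ θ₁ B →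
      lookupSub θ₁ a = S → S.isMonoB →
      InferRel Δ Θ Γ (.lam x M) Θ₁ (removeSub θ₁ a) (Ty.arrow S B)
  | alam {Δ Θ Γ x A M Θ₁ θ B} :
      InferRel Δ Θ ((x, A) :: Γ) M Θ₁ θ B →
      InferRel Δ Θ Γ (.alam x A M) Θ₁ θ (Ty.arrow A B)
  | app {Δ Θ Γ M N Θ₁ θ₁ A' Θ₂ θ₂ A Θ₃ θ₃'} (b : TVar) :
      InferRel Δ Θ Γ M Θ₁ θ₁ A' →
      InferRel Δ Θ₁ (substEnv θ₁ Γ) N Θ₂ θ₂ A →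
      b ∉ Δ → b ∉ Θ₂.map Prod.fst → b ∉ (A'.applySubst θ₂).ftv → b ∉ A.ftv →
      UnifyRel Δ (Θ₂ ++ [(b, Kind.poly)]) (A'.applySubst θ₂) (Ty.arrow A (.tvar b)) Θ₃ θ₃' →
      InferRel Δ Θ Γ (.app M N) Θ₃
        (compSubst (removeSub θ₃' b) (compSubst θ₂ θ₁)) (lookupSub θ₃' b)
  | lett {Δ Θ Γ x M N Θ₁ θ₁ A Δ' Δ'' Δ''' Θ₁' Θ₂ θ₂ B} :
      InferRel Δ Θ Γ M Θ₁ θ₁ A →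
      Δ' = listDiff (ftvSubst θ₁) Δ →
      genVars (dk (Δ ++ Δ')) A M = (Δ'', Δ''') →
      Θ₁' = demote Kind.mono Θ₁ Δ''' →
      InferRel Δ (removeVars Θ₁' Δ'') ((x, mkAll Δ'' A) :: substEnv θ₁ Γ) N Θ₂ θ₂ B →
      InferRel Δ Θ Γ (.lett x M N) Θ₂ (compSubst θ₂ θ₁) B
  | alet {Δ Θ Γ x A M N Δ' A' Θ₁ θ₁ A₁ Θ₂ θ₂' θ₂ Θ₃ θ₃ B} :
      splitTy A M = (Δ', A') →
      InferRel (Δ ++ Δ') Θ Γ M Θ₁ θ₁ A₁ →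
      UnifyRel (Δ ++ Δ') Θ₁ A' A₁ Θ₂ θ₂' →
      θ₂ = compSubst θ₂' θ₁ →
      (∀ a ∈ ftvSubst θ₂, a ∉ Δ') →
      InferRel Δ Θ₂ ((x, A) :: substEnv θ₂ Γ) N Θ₃ θ₃ B →
      InferRel Δ Θ Γ (.alet x A M N) Θ₃ (compSubst θ₃ θ₂) B

/-! ### Call-by-value System F -/

inductive FTm
  | var (x : ℕ)
  | lam (x : ℕ) (A : Ty) (M : FTm)
  | app (M N : FTm)
  | tlam (a : TVar) (V : FTm)
  | tapp (M : FTm) (A : Ty)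

/-- Instantiations `I ::= x | I A`. -/
def FTm.isInst : FTm → Bool
  | .var _ => true
  | .tapp M _ => M.isInst
  | _ => false

/-- System F values. -/
def FTm.isVal : FTm → Bool
  | .var _ => true
  | .lam _ _ _ => true
  | .tlam _ _ => true
  | .tapp M _ => M.isInst
  | .app _ _ => false

/-- System F typing (call-by-value, with the value restriction on type abstraction). -/
inductive FTyping : List TVar → TEnv → FTm → Ty → Prop
  | var {Δ Γ x A} : lookupEnv Γ x = some A → FTyping Δ Γ (.var x) A
  | lam {Δ Γ x A M B} : FTyping Δ ((x, A) :: Γ) M B →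
      FTyping Δ Γ (.lam x A M) (Ty.arrow A B)
  | app {Δ Γ M N A B} : FTyping Δ Γ M (Ty.arrow A B) → FTyping Δ Γ N A →
      FTyping Δ Γ (.app M N) B
  | tlam {Δ Γ a V A} : V.isVal → FTyping (a :: Δ) Γ V A →
      FTyping Δ Γ (.tlam a V) (.all a A)
  | tapp {Δ Γ M a B A} : FTyping Δ Γ M (.all a B) → HasKind (dk Δ) A Kind.poly →
      FTyping Δ Γ (.tapp M A) (B.applySubst [(a, A)])

def mkTApp (M : FTm) (As : List Ty) : FTm := As.foldl FTm.tapp M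

def mkTLam (as : List TVar) (M : FTm) : FTm := as.foldr FTm.tlam M

/-! ### Translation from System F to FreezeML -/

/-- The derivation-directed translation `⟦-⟧` from System F to FreezeML.
    `N@` is sugar for `let y = N in y`. -/
inductive TransFtoFz : List TVar → TEnv → FTm → Ty → Tm → Prop
  | var {Δ Γ x A} : lookupEnv Γ x = some A →
      TransFtoFz Δ Γ (.var x) A (.freeze x)
  | lam {Δ Γ x A M B M'} : TransFtoFz Δ ((x, A) :: Γ) M B M' →
      TransFtoFz Δ Γ (.lam x A M) (Ty.arrow A B) (.alam x A M')
  | app {Δ Γ M N A B M' N'} : TransFtoFz Δ Γ M (Ty.arrow A B) M' →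
      TransFtoFz Δ Γ N A N' →
      TransFtoFz Δ Γ (.app M N) B (.app M' N')
  | tlam {Δ Γ a V B V'} (x y : ℕ) : x ∉ Γ.map Prod.fst → y ∉ Γ.map Prod.fst → x ≠ y →
      V.isVal → TransFtoFz (a :: Δ) Γ V B V' →
      TransFtoFz Δ Γ (.tlam a V) (.all a B)
        (.alet x (.all a B) (.lett y V' (.var y)) (.freeze x))
  | tapp {Δ Γ M a B A M'} (x y : ℕ) : x ∉ Γ.map Prod.fst → y ∉ Γ.map Prod.fst → x ≠ y →
      TransFtoFz Δ Γ M (.all a B) M' → HasKind (dk Δ) A Kind.poly →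
      TransFtoFz Δ Γ (.tapp M A) (B.applySubst [(a, A)])
        (.alet x (B.applySubst [(a, A)]) (.lett y M' (.var y)) (.freeze x))

/-! ### Translation from FreezeML to System F -/

/-- The derivation-directed translation from FreezeML to System F
    (the principality side condition is not used). -/
inductive TransFzToF : List TVar → TEnv → Tm → Ty → FTm → Prop
  | freeze {Δ Γ x A} : lookupEnv Γ x = some A →
      TransFzToF Δ Γ (.freeze x) A (.var x)
  | var {Δ Γ x A₀ as H δ} : lookupEnv Γ x = some A₀ → A₀.splitAll = (as, H) →
      InstWF (dk Δ) δ as Kind.poly [] →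
      TransFzToF Δ Γ (.var x) (H.applySubst δ) (mkTApp (.var x) (as.map (lookupSub δ)))
  | lam {Δ Γ x M S B M'} : S.isMonoB →
      TransFzToF Δ ((x, S) :: Γ) M B M' →
      TransFzToF Δ Γ (.lam x M) (Ty.arrow S B) (.lam x S M')
  | alam {Δ Γ x A M B M'} :
      TransFzToF Δ ((x, A) :: Γ) M B M' →
      TransFzToF Δ Γ (.alam x A M) (Ty.arrow A B) (.lam x A M')
  | app {Δ Γ M N A B M' N'} :
      TransFzToF Δ Γ M (Ty.arrow A B) M' → TransFzToF Δ Γ N A N' →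
      TransFzToF Δ Γ (.app M N) B (.app M' N')
  | lett {Δ Γ x M N A' A Δ' Δ'' B M' N'} :
      genVars (dk Δ) A' M = (Δ', Δ'') →
      Updown (dk Δ) Δ'' M A' A →
      TransFzToF (Δ ++ Δ'') Γ M A' M' →
      TransFzToF Δ ((x, A) :: Γ) N B N' →
      TransFzToF Δ Γ (.lett x M N) B (.app (.lam x A N') (mkTLam Δ' M'))
  | alet {Δ Γ x A M N Δ' A' B M' N'} :
      splitTy A M = (Δ', A') →
      TransFzToF (Δ ++ Δ') Γ M A' M' →
      TransFzToF Δ ((x, A) :: Γ) N B N' →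
      TransFzToF Δ Γ (.alet x A M N) B (.app (.lam x A N') (mkTLam Δ' M'))

/-! ### ML -/

/-- ML typing (monotypes, type schemes, value restriction on let-generalisation). -/
inductive MLTyping : List TVar → TEnv → Tm → Ty → Prop
  | var {Δ Γ x P as S δ} : lookupEnv Γ x = some P → P.splitAll = (as, S) →
      S.isMonoB → InstWF (dk Δ) δ as Kind.mono [] →
      MLTyping Δ Γ (.var x) (S.applySubst δ)
  | lam {Δ Γ x M S T} : S.isMonoB → MLTyping Δ ((x, S) :: Γ) M T →
      MLTyping Δ Γ (.lam x M) (Ty.arrow S T)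
  | app {Δ Γ M N S T} : MLTyping Δ Γ M (Ty.arrow S T) → MLTyping Δ Γ N S →
      MLTyping Δ Γ (.app M N) T
  | lett {Δ Γ x M N S T Δ'} :
      Δ' = (if M.isVal then listDiff S.ftv Δ else []) →
      MLTyping (Δ ++ Δ') Γ M S →
      MLTyping Δ ((x, mkAll Δ' S) :: Γ) N T →
      MLTyping Δ Γ (.lett x M N) T

/-- The derivation-directed translation from ML to System F. -/
inductive MLTrans : List TVar → TEnv → Tm → Ty → FTm → Prop
  | var {Δ Γ x P as S δ} : lookupEnv Γ x = some P → P.splitAll = (as, S) →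
      S.isMonoB → InstWF (dk Δ) δ as Kind.mono [] →
      MLTrans Δ Γ (.var x) (S.applySubst δ) (mkTApp (.var x) (as.map (lookupSub δ)))
  | lam {Δ Γ x M S T M'} : S.isMonoB → MLTrans Δ ((x, S) :: Γ) M T M' →
      MLTrans Δ Γ (.lam x M) (Ty.arrow S T) (.lam x S M')
  | app {Δ Γ M N S T M' N'} : MLTrans Δ Γ M (Ty.arrow S T) M' → MLTrans Δ Γ N S N' →
      MLTrans Δ Γ (.app M N) T (.app M' N')
  | lett {Δ Γ x M N S T Δ' M' N'} :
      Δ' = (if M.isVal then listDiff S.ftv Δ else []) →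
      MLTrans (Δ ++ Δ') Γ M S M' →
      MLTrans Δ ((x, mkAll Δ' S) :: Γ) N T N' →
      MLTrans Δ Γ (.lett x M N) T (.app (.lam x (mkAll Δ' S) N') (mkTLam Δ' M'))

/-- `K' ≤ K` on kinds. -/
def KindLe (K' K : Kind) : Prop := K' = Kind.mono ∨ K' = K

end FreezeML

/-!
Types are compared through their de Bruijn forms `A.toDB []`, on which α-equivalence is
equality (`toDB_eq_of_aeq`, `aeq_of_toDB_eq`) and capture-avoiding substitution is plain
substitution (`toDB_applySubst`).

Completeness is proved by well-founded recursion on the number of flexible variables, then on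
the size of the problem, maintaining the invariant `Factorization`: `θ` factors through the
unifier `θ'` computed so far via a witness `θ''` with no free variables beyond those of `θ`.
Binding a flexible variable `a` to `B` removes `a` from the environment, and its checks pass
because `θ a ≡ θ B`: a proper occurrence of `a` in `B` would make `θ B` larger than `θ a`, and
if `a` is monomorphic then so is `θ a`, hence every `θ v` with `v` free in `B`. In the `∀` case
the skolem `c` is fresh for `θ` and fixed by `θ''`, so it cannot occur in `θ'`: this is the
escape check.
-/

namespace FreezeML

abbrev keysOf {α β : Type*} (l : List (α × β)) : List α := l.map Prod.fst

theorem freshFor_not_mem (l : List TVar) : freshFor l ∉ l := by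
  have hle : ∀ x ∈ l, x ≤ l.foldr max 0 := by
    induction l with
    | nil => simp
    | cons b l ih =>
      simp only [List.mem_cons, List.foldr_cons, forall_eq_or_imp]
      exact ⟨le_max_left _ _, fun x hx => (ih x hx).trans (le_max_right _ _)⟩
  exact fun h => Nat.not_succ_le_self _ (hle _ h)

@[simp] theorem keysOf_dk (Δ : List TVar) : keysOf (dk Δ) = Δ := by
  simp [dk, keysOf, Function.comp_def]

theorem mem_listDiff {l d : List TVar} {x : TVar} : x ∈ listDiff l d ↔ x ∈ l ∧ x ∉ d := by
  simp [listDiff]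

@[simp] theorem lookupSub_nil (a : TVar) : lookupSub [] a = .tvar a := rfl

@[simp] theorem lookupSub_cons (p : TVar × Ty) (θ : Subst) (a : TVar) :
    lookupSub (p :: θ) a = if p.1 = a then p.2 else lookupSub θ a := by
  unfold lookupSub
  by_cases h : p.1 = a <;> simp [h]

theorem lookupSub_of_not_mem {θ : Subst} {a : TVar} (h : a ∉ keysOf θ) :
    lookupSub θ a = .tvar a := by
  induction θ with
  | nil => rfl
  | cons p θ ih =>
    simp only [keysOf, List.map_cons, List.mem_cons, not_or] at h
    simp [Ne.symm h.1, ih h.2]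

theorem lookupSub_mem {θ : Subst} {a : TVar} (h : a ∈ keysOf θ) : (a, lookupSub θ a) ∈ θ := by
  induction θ with
  | nil => simp at h
  | cons p θ ih =>
    by_cases hpa : p.1 = a
    · subst hpa; simp
    · simp only [keysOf, List.map_cons, List.mem_cons, Ne.symm hpa, false_or] at h
      simp [hpa, ih h]

theorem mem_ftvSubst {θ : Subst} {x : TVar} : x ∈ ftvSubst θ ↔ ∃ p ∈ θ, x ∈ p.2.ftv := by
  simp [ftvSubst]

theorem ftv_lookupSub_subset {θ : Subst} {a : TVar} (h : a ∈ keysOf θ) :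
    (lookupSub θ a).ftv ⊆ ftvSubst θ :=
  fun _ hx => mem_ftvSubst.2 ⟨_, lookupSub_mem h, hx⟩

@[induction_eliminator]
theorem Ty.induction_nested {P : Ty → Prop} (tvar : ∀ a, P (.tvar a))
    (con : ∀ d args, (∀ A ∈ args, P A) → P (.con d args))
    (all : ∀ a A, P A → P (.all a A)) : ∀ A, P A
  | .tvar a => tvar a
  | .con d args => con d args fun A _ => Ty.induction_nested tvar con all A
  | .all a A => all a A (Ty.induction_nested tvar con all A)

@[simp] theorem ftv_tvar (a : TVar) : (Ty.tvar a).ftv = [a] := by rw [Ty.ftv]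

@[simp] theorem ftv_con (d : ℕ) (args : List Ty) :
    (Ty.con d args).ftv = (args.map Ty.ftv).flatten := by
  rw [Ty.ftv, List.map_attach_eq_pmap]; simp

@[simp] theorem ftv_all (a : TVar) (A : Ty) :
    (Ty.all a A).ftv = A.ftv.filter (fun b => decide (b ≠ a)) := by rw [Ty.ftv]

theorem mem_ftv_con {d : ℕ} {args : List Ty} {x : TVar} :
    x ∈ (Ty.con d args).ftv ↔ ∃ A ∈ args, x ∈ A.ftv := by
  simp

theorem mem_ftv_all {a x : TVar} {A : Ty} : x ∈ (Ty.all a A).ftv ↔ x ∈ A.ftv ∧ x ≠ a := by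
  simp

@[simp] theorem applySubst_tvar (a : TVar) (θ : Subst) :
    (Ty.tvar a).applySubst θ = lookupSub θ a := by rw [Ty.applySubst]

@[simp] theorem applySubst_con (d : ℕ) (args : List Ty) (θ : Subst) :
    (Ty.con d args).applySubst θ = .con d (args.map (·.applySubst θ)) := by
  rw [Ty.applySubst, List.map_attach_eq_pmap]; simp

theorem applySubst_all (a : TVar) (A : Ty) (θ : Subst) :
    (Ty.all a A).applySubst θ =
      let c := freshFor (ftvSubst θ ++ A.ftv ++ [a])
      .all c (A.applySubst ((a, .tvar c) :: θ)) := by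
  rw [Ty.applySubst]

@[simp] theorem isMonoB_tvar (a : TVar) : (Ty.tvar a).isMonoB := by rw [Ty.isMonoB]

@[simp] theorem isMonoB_con (d : ℕ) (args : List Ty) :
    (Ty.con d args).isMonoB ↔ ∀ A ∈ args, A.isMonoB := by
  rw [Ty.isMonoB]; simp

@[simp] theorem isMonoB_all (a : TVar) (A : Ty) : ¬ (Ty.all a A).isMonoB := by
  rw [Ty.isMonoB]; simp

theorem isMonoB_applySubst {A : Ty} {θ : Subst} :
    (A.applySubst θ).isMonoB ↔ A.isMonoB ∧ ∀ v ∈ A.ftv, (lookupSub θ v).isMonoB := by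
  induction A generalizing θ with
  | tvar a => simp
  | con d args ih =>
    simp only [applySubst_con, isMonoB_con, List.mem_map, forall_exists_index, and_imp,
      forall_apply_eq_imp_iff₂, mem_ftv_con]
    constructor
    · intro h
      exact ⟨fun A hA => ((ih A hA).1 (h A hA)).1,
        fun v A hA hv => ((ih A hA).1 (h A hA)).2 v hv⟩
    · rintro ⟨h₁, h₂⟩ A hA
      exact (ih A hA).2 ⟨h₁ A hA, fun v hv => h₂ v A hA hv⟩
  | all a A ih => simp [applySubst_all]

theorem lookupSub_compSubst (σ τ : Subst) (v : TVar) :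
    lookupSub (compSubst σ τ) v = (lookupSub τ v).applySubst σ := by
  induction τ with
  | nil => simp [compSubst]
  | cons p τ ih =>
    by_cases h : p.1 = v <;> simp_all [compSubst]

/-! ### de Bruijn representation -/

inductive DB
  | bvar (i : ℕ)
  | fvar (a : TVar)
  | con (d : ℕ) (args : List DB)
  | all (body : DB)

namespace DB

@[induction_eliminator]
theorem induction_nested {P : DB → Prop} (bvar : ∀ i, P (.bvar i)) (fvar : ∀ a, P (.fvar a))
    (con : ∀ d args, (∀ t ∈ args, P t) → P (.con d args)) (all : ∀ t, P t → P (.all t)) :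
    ∀ t, P t
  | .bvar i => bvar i
  | .fvar a => fvar a
  | .con d args => con d args fun t _ => induction_nested bvar fvar con all t
  | .all t => all t (induction_nested bvar fvar con all t)

@[simp] def subst (F : TVar → DB) : DB → DB
  | .bvar i => .bvar i
  | .fvar a => F a
  | .con d args => .con d (args.map (subst F))
  | .all t => .all (subst F t)

@[simp] def fv : DB → List TVar
  | .bvar _ => []
  | .fvar a => [a]
  | .con _ args => (args.map fv).flatten
  | .all t => fv t

@[simp] def size : DB → ℕ
  | .bvar _ => 1
  | .fvar _ => 1
  | .con _ args => 1 + (args.map size).sum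
  | .all t => 1 + size t

@[simp] def openAt (u : DB) : ℕ → DB → DB
  | k, .bvar i => if i = k then u else .bvar i
  | _, .fvar a => .fvar a
  | k, .con d args => .con d (args.map (openAt u k))
  | k, .all t => .all (openAt u (k + 1) t)

@[simp] def closeAt (c : TVar) : ℕ → DB → DB
  | _, .bvar i => .bvar i
  | k, .fvar a => if a = c then .bvar k else .fvar a
  | k, .con d args => .con d (args.map (closeAt c k))
  | k, .all t => .all (closeAt c (k + 1) t)

inductive ClosedAt : ℕ → DB → Prop
  | bvar {i k} : i < k → ClosedAt k (.bvar i)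
  | fvar {a k} : ClosedAt k (.fvar a)
  | con {d args k} : (∀ t ∈ args, ClosedAt k t) → ClosedAt k (.con d args)
  | all {t k} : ClosedAt (k + 1) t → ClosedAt k (.all t)

inductive IsMono : DB → Prop
  | bvar {i} : IsMono (.bvar i)
  | fvar {a} : IsMono (.fvar a)
  | con {d args} : (∀ t ∈ args, IsMono t) → IsMono (.con d args)

theorem isMono_con_iff {d : ℕ} {args : List DB} : IsMono (.con d args) ↔ ∀ t ∈ args, IsMono t :=
  ⟨fun h => by cases h; assumption, IsMono.con⟩

theorem not_isMono_all (t : DB) : ¬ IsMono (.all t) := nofun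

theorem subst_fvar (t : DB) : t.subst .fvar = t := by
  induction t with
  | con d args ih => simpa using List.map_congr_left ih |>.trans (List.map_id _)
  | all t ih => simpa using ih
  | _ => simp

theorem subst_congr {F G : TVar → DB} {t : DB} (h : ∀ v ∈ t.fv, F v = G v) :
    t.subst F = t.subst G := by
  induction t with
  | fvar a => simpa using h
  | con d args ih =>
    simp only [fv, List.mem_flatten, List.mem_map] at h
    simp only [subst, con.injEq, true_and]
    exact List.map_congr_left fun t ht => ih t ht fun v hv => h v ⟨t.fv, ⟨t, ht, rfl⟩, hv⟩
  | all t ih => simpa using ih (by simpa using h)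
  | bvar i => simp

theorem subst_subst (F G : TVar → DB) (t : DB) :
    (t.subst F).subst G = t.subst fun v => (F v).subst G := by
  induction t with
  | con d args ih => simpa using List.map_congr_left ih
  | all t ih => simpa using ih
  | _ => simp

theorem mem_fv_subst {x : TVar} {F : TVar → DB} {t : DB} :
    x ∈ (t.subst F).fv ↔ ∃ v ∈ t.fv, x ∈ (F v).fv := by
  induction t with
  | con d args ih =>
    simp only [subst, fv, List.map_map, List.mem_flatten, List.mem_map, Function.comp_apply]
    constructor
    · rintro ⟨_, ⟨t, ht, rfl⟩, hx⟩
      obtain ⟨v, hv, hxv⟩ := (ih t ht).1 hx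
      exact ⟨v, ⟨_, ⟨t, ht, rfl⟩, hv⟩, hxv⟩
    · rintro ⟨v, ⟨_, ⟨t, ht, rfl⟩, hv⟩, hxv⟩
      exact ⟨_, ⟨t, ht, rfl⟩, (ih t ht).2 ⟨v, hv, hxv⟩⟩
  | all t ih => simpa using ih
  | _ => simp

theorem size_pos (t : DB) : 0 < t.size := by
  cases t <;> simp

theorem size_lt_size_con {d : ℕ} {args : List DB} {t : DB} (ht : t ∈ args) :
    t.size < (DB.con d args).size := by
  have := List.le_sum_of_mem (List.mem_map_of_mem (f := size) ht)
  simp only [size]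
  omega

theorem size_le_size_subst {x : TVar} {F : TVar → DB} {t : DB} (hx : x ∈ t.fv) :
    (F x).size ≤ (t.subst F).size := by
  induction t with
  | fvar a => simp_all
  | con d args ih =>
    obtain ⟨t, ht, hxt⟩ : ∃ t ∈ args, x ∈ t.fv := by simpa using hx
    simp only [subst]
    exact (ih t ht hxt).trans (size_lt_size_con (List.mem_map_of_mem ht)).le
  | all t ih => exact (ih (by simpa using hx)).trans (by simp)
  | bvar i => simp at hx

theorem size_lt_size_subst {x : TVar} {F : TVar → DB} {t : DB} (hx : x ∈ t.fv)
    (ht : t ≠ .fvar x) : (F x).size < (t.subst F).size := by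
  cases t with
  | fvar a => simp_all
  | con d args =>
    obtain ⟨t, ht, hxt⟩ : ∃ t ∈ args, x ∈ t.fv := by simpa using hx
    simp only [subst]
    exact (size_le_size_subst hxt).trans_lt (size_lt_size_con (List.mem_map_of_mem ht))
  | all t => exact (size_le_size_subst (by simpa using hx)).trans_lt (by simp)
  | bvar i => simp at hx

theorem openAt_of_closedAt {u t : DB} {k j : ℕ} (h : ClosedAt k t) (hkj : k ≤ j) :
    openAt u j t = t := by
  induction h generalizing j with
  | bvar hik => simp; omega
  | fvar => simp
  | con _ ih => simpa using List.map_congr_left (ih · · hkj) |>.trans (List.map_id _)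
  | all _ ih => simpa using ih (by omega)

theorem size_openAt_fvar (c : TVar) (k : ℕ) (t : DB) : (openAt (.fvar c) k t).size = t.size := by
  induction t generalizing k with
  | bvar i => by_cases h : i = k <;> simp [h]
  | con d args ih =>
    have : args.map (fun t => (openAt (.fvar c) k t).size) = args.map size :=
      List.map_congr_left fun t ht => ih t ht k
    simp only [openAt, size, List.map_map, Function.comp_def, this]
  | all t ih => simpa using ih (k + 1)
  | fvar a => simp

end DB

open DB

@[simp] def Ty.toDB : Ty → List TVar → DB
  | .tvar a, ctx => if a ∈ ctx then .bvar (ctx.idxOf a) else .fvar a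
  | .con d args, ctx => .con d (args.map (·.toDB ctx))
  | .all a A, ctx => .all (A.toDB (a :: ctx))

theorem mem_fv_toDB {x : TVar} {A : Ty} {ctx : List TVar} :
    x ∈ (A.toDB ctx).fv ↔ x ∈ A.ftv ∧ x ∉ ctx := by
  induction A generalizing ctx with
  | tvar a => by_cases ha : a ∈ ctx <;> aesop
  | con d args ih => simp; aesop
  | all a A ih => simp [ih]; tauto

theorem mem_fv_toDB_nil {x : TVar} {A : Ty} : x ∈ (A.toDB []).fv ↔ x ∈ A.ftv := by
  simp [mem_fv_toDB]

theorem mem_ftv_of_toDB_eq {A B : Ty} (h : A.toDB [] = B.toDB []) {x : TVar} :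
    x ∈ A.ftv ↔ x ∈ B.ftv := by
  rw [← mem_fv_toDB_nil, h, mem_fv_toDB_nil]

theorem eq_tvar_of_toDB_eq_fvar {A : Ty} {v : TVar} (h : A.toDB [] = .fvar v) : A = .tvar v := by
  cases A <;> simp_all

theorem closedAt_toDB (A : Ty) (ctx : List TVar) : ClosedAt ctx.length (A.toDB ctx) := by
  induction A generalizing ctx with
  | tvar a =>
    by_cases ha : a ∈ ctx
    · simpa [ha] using ClosedAt.bvar (List.idxOf_lt_length_of_mem ha)
    · simpa [ha] using ClosedAt.fvar
  | con d args ih =>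
    simp only [Ty.toDB]
    exact ClosedAt.con fun t ht => by
      obtain ⟨A, hA, rfl⟩ := List.mem_map.1 ht
      exact ih A hA ctx
  | all a A ih =>
    simp only [Ty.toDB]
    exact ClosedAt.all (ih (a :: ctx))

theorem isMonoB_iff_isMono_toDB (A : Ty) (ctx : List TVar) :
    A.isMonoB ↔ IsMono (A.toDB ctx) := by
  induction A generalizing ctx with
  | tvar a => by_cases h : a ∈ ctx <;> simp [h, IsMono.bvar, IsMono.fvar]
  | con d args ih =>
    simp only [isMonoB_con, Ty.toDB, isMono_con_iff, List.mem_map, forall_exists_index, and_imp,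
      forall_apply_eq_imp_iff₂]
    exact forall₂_congr fun A hA => ih A hA ctx
  | all a A ih => simp [not_isMono_all]

theorem toDB_append_of_disjoint {A : Ty} {bnd ctx : List TVar}
    (h : ∀ w ∈ A.ftv, w ∉ bnd → w ∉ ctx) : A.toDB (bnd ++ ctx) = A.toDB bnd := by
  induction A generalizing bnd with
  | tvar a =>
    by_cases ha : a ∈ bnd
    · simp [ha, List.idxOf_append_of_mem ha]
    · simp [ha, h a (by simp) ha]
  | con d args ih =>
    simpa using List.map_congr_left fun A hA =>
      ih A hA fun w hw => h w (mem_ftv_con.2 ⟨A, hA, hw⟩)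
  | all a A ih =>
    simpa using ih (bnd := a :: bnd) fun w hw hwb => by
      simp only [List.mem_cons, not_or] at hwb
      exact h w (mem_ftv_all.2 ⟨hw, hwb.1⟩) hwb.2

theorem toDB_append_singleton (A : Ty) (bnd : List TVar) (c : TVar) :
    A.toDB (bnd ++ [c]) = (A.toDB bnd).closeAt c bnd.length := by
  induction A generalizing bnd with
  | tvar a =>
    by_cases ha : a ∈ bnd
    · simp [ha, List.idxOf_append_of_mem ha]
    · by_cases hac : a = c
      · subst hac; simp [ha, List.idxOf_append_of_notMem ha]
      · simp [ha, hac]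
  | con d args ih => simpa using List.map_congr_left fun A hA => ih A hA bnd
  | all a A ih => simpa using ih (a :: bnd)

theorem openAt_subst_toDB {u : DB} {F : TVar → DB} (hF : ∀ v, ClosedAt 0 (F v))
    (A : Ty) (bnd : List TVar) (a : TVar) :
    openAt u bnd.length ((A.toDB (bnd ++ [a])).subst F) =
      (A.toDB bnd).subst (Function.update F a u) := by
  induction A generalizing bnd with
  | tvar v =>
    by_cases hv : v ∈ bnd
    · have := List.idxOf_lt_length_of_mem hv
      simp [hv, List.idxOf_append_of_mem hv]; omega
    · by_cases hva : v = a
      · subst hva; simp [hv, List.idxOf_append_of_notMem hv]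
      · simp [hv, hva, openAt_of_closedAt (hF v) (Nat.zero_le _)]
  | con d args ih => simpa using List.map_congr_left fun A hA => ih A hA bnd
  | all b A ih => simpa using ih (b :: bnd)

/-! ### Substitution in de Bruijn form -/

theorem bound_renaming_cons {θ : Subst} {bnd ctx : List TVar} {a c : TVar}
    (hbnd : ∀ v ∈ bnd, ∃ c₀ ∈ ctx, lookupSub θ v = .tvar c₀ ∧ ctx.idxOf c₀ = bnd.idxOf v)
    (hctx : ∀ x ∈ ctx, x ∈ ftvSubst θ) (hc : c ∉ ftvSubst θ) :
    ∀ v ∈ a :: bnd, ∃ c₀ ∈ c :: ctx, lookupSub ((a, .tvar c) :: θ) v = .tvar c₀ ∧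
      (c :: ctx).idxOf c₀ = (a :: bnd).idxOf v := by
  intro v hv
  by_cases hva : v = a
  · subst hva; exact ⟨c, List.mem_cons_self, by simp, by simp⟩
  · obtain ⟨c₀, hc₀, hθv, hidx⟩ := hbnd v (List.mem_of_ne_of_mem hva hv)
    have hc₀c : c₀ ≠ c := fun h => hc (h ▸ hctx c₀ hc₀)
    refine ⟨c₀, List.mem_cons_of_mem _ hc₀, by simp [Ne.symm hva, hθv], ?_⟩
    rw [List.idxOf_cons_ne _ (Ne.symm hc₀c), List.idxOf_cons_ne _ (Ne.symm hva), hidx]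

/-- The general form of `toDB_applySubst`, for the induction under binders: `bnd` and `ctx`
are the binders passed so far in `A` and in `A.applySubst θ`, and `θ` renames the former to
the latter. -/
theorem toDB_applySubst_of_bound (A : Ty) (θ : Subst) (bnd ctx : List TVar)
    (hbnd : ∀ v ∈ bnd, ∃ c ∈ ctx, lookupSub θ v = .tvar c ∧ ctx.idxOf c = bnd.idxOf v)
    (hfree : ∀ v ∈ A.ftv, v ∉ bnd → ∀ w ∈ (lookupSub θ v).ftv, w ∉ ctx)
    (hctx : ∀ x ∈ ctx, x ∈ ftvSubst θ) :
    (A.applySubst θ).toDB ctx = (A.toDB bnd).subst fun v => (lookupSub θ v).toDB ctx := by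
  induction A generalizing θ bnd ctx with
  | tvar v =>
    by_cases hv : v ∈ bnd
    · obtain ⟨c, hc, hθv, hidx⟩ := hbnd v hv
      simp [hv, hc, hθv, hidx]
    · simp [hv]
  | con d args ih =>
    simpa using List.map_congr_left fun A hA =>
      ih A hA θ bnd ctx hbnd (fun v hv => hfree v (mem_ftv_con.2 ⟨A, hA, hv⟩)) hctx
  | all a A ih =>
    set c := freshFor (ftvSubst θ ++ A.ftv ++ [a]) with hc_def
    have hc : c ∉ ftvSubst θ ∧ c ∉ A.ftv ∧ c ≠ a := by
      have h := freshFor_not_mem (ftvSubst θ ++ A.ftv ++ [a])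
      rw [← hc_def] at h
      simp only [List.mem_append, List.mem_singleton, not_or] at h
      exact ⟨h.1.1, h.1.2, h.2⟩
    have hne : ∀ v ∉ a :: bnd, lookupSub ((a, .tvar c) :: θ) v = lookupSub θ v :=
      fun v hv => by simp [Ne.symm (List.ne_of_not_mem_cons hv)]
    have hfree' : ∀ v ∈ A.ftv, v ∉ a :: bnd → ∀ w ∈ (lookupSub θ v).ftv, w ∉ c :: ctx := by
      intro v hv hvb w hw
      simp only [List.mem_cons, not_or] at hvb ⊢
      refine ⟨fun hwc => ?_, hfree v (mem_ftv_all.2 ⟨hv, hvb.1⟩) hvb.2 w hw⟩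
      by_cases hvθ : v ∈ keysOf θ
      · exact hc.1 (hwc ▸ ftv_lookupSub_subset hvθ hw)
      · simp only [lookupSub_of_not_mem hvθ, ftv_tvar, List.mem_singleton] at hw
        exact hc.2.1 (hwc ▸ hw ▸ hv)
    rw [applySubst_all]
    simp only [Ty.toDB, subst, all.injEq]
    rw [ih ((a, .tvar c) :: θ) (a :: bnd) (c :: ctx) (bound_renaming_cons hbnd hctx hc.1)
      (fun v hv hvb w hw => hfree' v hv hvb w (hne v hvb ▸ hw))
      (fun x hx => by rcases List.mem_cons.1 hx with rfl | hx <;> simp_all [ftvSubst])]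
    refine subst_congr fun v hv => ?_
    obtain ⟨hvA, hvb⟩ := mem_fv_toDB.1 hv
    have hdisj := hfree' v hvA hvb
    have e₁ := toDB_append_of_disjoint (bnd := []) fun w hw _ => hdisj w hw
    have e₂ := toDB_append_of_disjoint (bnd := []) (ctx := ctx)
      fun w hw _ hwc => hdisj w hw (List.mem_cons_of_mem _ hwc)
    simp only [List.nil_append] at e₁ e₂
    rw [hne v hvb, e₁, e₂]

theorem toDB_applySubst (A : Ty) (θ : Subst) :
    (A.applySubst θ).toDB [] = (A.toDB []).subst fun v => (lookupSub θ v).toDB [] :=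
  toDB_applySubst_of_bound A θ [] [] (by simp) (by simp) (by simp)

theorem toDB_applySubst_nil (A : Ty) : (A.applySubst []).toDB [] = A.toDB [] := by
  rw [toDB_applySubst]
  exact (subst_congr fun v _ => by simp).trans (subst_fvar _)

theorem mem_ftv_applySubst {x : TVar} {A : Ty} {θ : Subst} :
    x ∈ (A.applySubst θ).ftv ↔ ∃ v ∈ A.ftv, x ∈ (lookupSub θ v).ftv := by
  simp only [← mem_fv_toDB_nil, toDB_applySubst, mem_fv_subst]

theorem not_mem_ftv_of_toDB_eq {θ : Subst} {a : TVar} {B : Ty} (hB : B ≠ .tvar a)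
    (heq : (lookupSub θ a).toDB [] = (B.applySubst θ).toDB []) : a ∉ B.ftv := by
  intro ha
  have := size_lt_size_subst (F := fun v => (lookupSub θ v).toDB []) (mem_fv_toDB_nil.2 ha)
    (fun h => hB (eq_tvar_of_toDB_eq_fvar h))
  rw [← toDB_applySubst, ← heq] at this
  exact lt_irrefl _ this

theorem toDB_rename_of_not_mem {A : Ty} {a c : TVar} (hc : c ∉ A.ftv) :
    (A.applySubst [(a, .tvar c)]).toDB [c] = A.toDB [a] := by
  rw [toDB_applySubst_of_bound A _ [a] [c]]
  · refine (subst_congr fun v hv => ?_).trans (subst_fvar _)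
    obtain ⟨hvA, hva⟩ := mem_fv_toDB.1 hv
    have hvc : v ≠ c := fun h => hc (h ▸ hvA)
    simp_all [eq_comm]
  · simp
  · intro v hv hva w hw
    have hav : a ≠ v := fun h => hva (by simp [h])
    simp only [lookupSub_cons, hav, if_false, lookupSub_nil, ftv_tvar,
      List.mem_singleton] at hw
    subst hw
    simpa using fun h : w = c => hc (h ▸ hv)
  · simp [mem_ftvSubst]

theorem toDB_rename (A : Ty) (a c : TVar) :
    (A.applySubst [(a, .tvar c)]).toDB [] = openAt (.fvar c) 0 (A.toDB [a]) := by
  have h := openAt_subst_toDB (u := .fvar c) (F := .fvar) (fun _ => ClosedAt.fvar) A [] a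
  simp only [List.nil_append, subst_fvar, List.length_nil] at h
  rw [h, toDB_applySubst]
  refine subst_congr fun v _ => ?_
  by_cases hav : a = v
  · subst hav; simp
  · simp [hav, Function.update_of_ne (Ne.symm hav)]

theorem size_toDB_rename (A : Ty) (a c : TVar) :
    ((A.applySubst [(a, .tvar c)]).toDB []).size = (A.toDB [a]).size := by
  rw [toDB_rename, size_openAt_fvar]

theorem toDB_rename_applySubst {θ : Subst} {c : TVar} (hθc : lookupSub θ c = .tvar c)
    (X : Ty) (x : TVar) :
    ((X.applySubst [(x, .tvar c)]).applySubst θ).toDB [] =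
      openAt (.fvar c) 0 ((X.toDB [x]).subst fun v => (lookupSub θ v).toDB []) := by
  have h := openAt_subst_toDB (u := .fvar c) (F := fun v => (lookupSub θ v).toDB [])
    (fun v => closedAt_toDB (lookupSub θ v) []) X [] x
  simp only [List.nil_append, List.length_nil] at h
  rw [h, toDB_applySubst, toDB_applySubst, subst_subst]
  refine subst_congr fun v _ => ?_
  by_cases hxv : x = v
  · subst hxv; simp [hθc]
  · simp [hxv, Function.update_of_ne (Ne.symm hxv)]

theorem ftv_rename_subset (A : Ty) (a c : TVar) :
    (A.applySubst [(a, .tvar c)]).ftv ⊆ c :: (Ty.all a A).ftv := by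
  intro x hx
  obtain ⟨v, hv, hxv⟩ := mem_ftv_applySubst.1 hx
  by_cases hav : a = v
  · simp_all
  · simp only [lookupSub_cons, hav, if_false, lookupSub_nil, ftv_tvar,
      List.mem_singleton] at hxv
    subst hxv
    exact List.mem_cons_of_mem _ (mem_ftv_all.2 ⟨hv, Ne.symm hav⟩)

/-! ### α-equivalence -/

theorem map_eq_map_iff_forall_mem_zip {α β γ : Type*} {f : α → γ} {g : β → γ}
    {l₁ : List α} {l₂ : List β} (hlen : l₁.length = l₂.length) :
    l₁.map f = l₂.map g ↔ ∀ p ∈ l₁.zip l₂, f p.1 = g p.2 := by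
  have h := List.map_inj_left (l := l₁.zip l₂) (f := f ∘ Prod.fst) (g := g ∘ Prod.snd)
  rw [← List.map_map, ← List.map_map, List.map_fst_zip hlen.le, List.map_snd_zip hlen.ge] at h
  simpa using h

theorem toDB_eq_of_aeq {A B : Ty} (h : Aeq A B) : A.toDB [] = B.toDB [] := by
  induction h with
  | var a => rfl
  | con hlen _ ih => simpa using (map_eq_map_iff_forall_mem_zip hlen).2 ih
  | @all a b A B c hcA hcB _ ih =>
    have hA := toDB_append_singleton (A.applySubst [(a, .tvar c)]) [] c
    have hB := toDB_append_singleton (B.applySubst [(b, .tvar c)]) [] c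
    simp only [List.nil_append, List.length_nil, toDB_rename_of_not_mem hcA,
      toDB_rename_of_not_mem hcB] at hA hB
    simp [hA, hB, ih]

theorem aeq_of_toDB_eq {A B : Ty} (h : A.toDB [] = B.toDB []) : Aeq A B := by
  induction hn : (A.toDB []).size using Nat.strong_induction_on generalizing A B with
  | _ n ih =>
  cases A with
  | tvar a =>
    obtain rfl := eq_tvar_of_toDB_eq_fvar (A := B) (v := a) (by simpa using h.symm)
    exact Aeq.var a
  | con d args =>
    cases B with
    | con d' args' =>
      simp only [Ty.toDB, DB.con.injEq] at h
      obtain ⟨rfl, hargs⟩ := h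
      have hlen : args.length = args'.length := by simpa using congrArg List.length hargs
      refine Aeq.con hlen fun p hp =>
        ih _ ?_ ((map_eq_map_iff_forall_mem_zip hlen).1 hargs p hp) rfl
      rw [← hn, Ty.toDB]
      exact size_lt_size_con (List.mem_map_of_mem (List.of_mem_zip hp).1)
    | _ => simp at h
  | all a A =>
    cases B with
    | all b B =>
      simp only [Ty.toDB, DB.all.injEq] at h
      obtain ⟨c, hc⟩ : ∃ c, c ∉ A.ftv ++ B.ftv := ⟨_, freshFor_not_mem _⟩
      rw [List.mem_append, not_or] at hc
      refine Aeq.all c hc.1 hc.2 (ih _ ?_ (by rw [toDB_rename, toDB_rename, h]) rfl)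
      simp [← hn, size_toDB_rename]
    | _ => simp at h

/-! ### Kinding -/

theorem HasKind.ftv_subset {E : KEnv} {A : Ty} {K : Kind} (h : HasKind E A K) :
    A.ftv ⊆ keysOf E := by
  induction h with
  | var hmem =>
    intro v hv
    rw [ftv_tvar, List.mem_singleton] at hv
    exact hv ▸ List.mem_map_of_mem (f := Prod.fst) hmem
  | con _ ih =>
    intro v hv
    obtain ⟨A, hA, hvA⟩ := mem_ftv_con.1 hv
    exact ih A hA hvA
  | all _ ih =>
    intro v hv
    obtain ⟨hvA, hva⟩ := mem_ftv_all.1 hv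
    simpa [hva] using ih hvA
  | up _ ih => exact ih

theorem hasKind_poly_iff {E : KEnv} {A : Ty} : HasKind E A .poly ↔ A.ftv ⊆ keysOf E := by
  refine ⟨HasKind.ftv_subset, fun h => ?_⟩
  induction A generalizing E with
  | tvar a =>
    obtain ⟨⟨_, K⟩, hp, rfl⟩ := List.mem_map.1 (h (by simp : a ∈ (Ty.tvar a).ftv))
    cases K
    · exact HasKind.up (HasKind.var hp)
    · exact HasKind.var hp
  | con d args ih =>
    exact HasKind.con fun A hA => ih A hA fun v hv => h (mem_ftv_con.2 ⟨A, hA, hv⟩)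
  | all a A ih =>
    refine HasKind.all (ih fun v hv => ?_)
    by_cases hva : v = a
    · simp [hva]
    · simpa using Or.inr (h (mem_ftv_all.2 ⟨hv, hva⟩))

theorem hasKind_mono_iff {E : KEnv} {A : Ty} :
    HasKind E A .mono ↔ A.isMonoB ∧ ∀ v ∈ A.ftv, (v, Kind.mono) ∈ E := by
  constructor
  · intro h
    generalize hK : Kind.mono = K at h
    induction h with
    | var hmem => subst hK; simpa using hmem
    | con _ ih =>
      simp only [isMonoB_con, mem_ftv_con]
      exact ⟨fun A hA => (ih A hA hK).1, fun v ⟨A, hA, hv⟩ => (ih A hA hK).2 v hv⟩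
    | all _ _ | up _ _ => cases hK
  · rintro ⟨hmono, hvars⟩
    induction A with
    | tvar a => exact HasKind.var (hvars a (by simp))
    | con d args ih =>
      rw [isMonoB_con] at hmono
      exact HasKind.con fun A hA =>
        ih A hA (hmono A hA) fun v hv => hvars v (mem_ftv_con.2 ⟨A, hA, hv⟩)
    | all a A _ => simp at hmono

theorem HasKind.of_env {E E' : KEnv} {A : Ty} {K : Kind}
    (hE : ∀ v ∈ A.ftv, ∀ K', (v, K') ∈ E → (v, K') ∈ E') (h : HasKind E A K) :
    HasKind E' A K := by
  cases K with
  | poly =>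
    refine hasKind_poly_iff.2 fun v hv => ?_
    obtain ⟨⟨_, K'⟩, hp, rfl⟩ := List.mem_map.1 (h.ftv_subset hv)
    exact List.mem_map_of_mem (hE _ hv K' hp)
  | mono =>
    obtain ⟨hmono, hvars⟩ := hasKind_mono_iff.1 h
    exact hasKind_mono_iff.2 ⟨hmono, fun v hv => hE v hv _ (hvars v hv)⟩

theorem HasKind.of_toDB_eq {E : KEnv} {A B : Ty} {K : Kind} (hAB : A.toDB [] = B.toDB [])
    (h : HasKind E A K) : HasKind E B K := by
  cases K with
  | poly =>
    exact hasKind_poly_iff.2 fun v hv => h.ftv_subset ((mem_ftv_of_toDB_eq hAB).2 hv)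
  | mono =>
    obtain ⟨hmono, hvars⟩ := hasKind_mono_iff.1 h
    refine hasKind_mono_iff.2 ⟨?_, fun v hv => hvars v ((mem_ftv_of_toDB_eq hAB).2 hv)⟩
    rw [isMonoB_iff_isMono_toDB _ [], ← hAB, ← isMonoB_iff_isMono_toDB]
    exact hmono

theorem HasKind.mono_of_applySubst {E : KEnv} {B : Ty} {θ : Subst} {v : TVar}
    (h : HasKind E (B.applySubst θ) .mono) (hv : v ∈ B.ftv) : HasKind E (lookupSub θ v) .mono := by
  obtain ⟨hmono, hvars⟩ := hasKind_mono_iff.1 h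
  exact hasKind_mono_iff.2 ⟨(isMonoB_applySubst.1 hmono).2 v hv,
    fun x hx => hvars x (mem_ftv_applySubst.2 ⟨v, hv, hx⟩)⟩

theorem removeK_eq_some_of_mem {Θ : KEnv} {a : TVar} (h : a ∈ keysOf Θ) :
    ∃ K Θ₁ Θ₂, Θ = Θ₁ ++ (a, K) :: Θ₂ ∧ removeK Θ a = some (K, Θ₁ ++ Θ₂) := by
  induction Θ with
  | nil => simp at h
  | cons p Θ ih =>
    by_cases hpa : p.1 = a
    · exact ⟨p.2, [], Θ, by simp [← hpa], by simp [removeK, hpa]⟩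
    · simp only [keysOf, List.map_cons, List.mem_cons, Ne.symm hpa, false_or] at h
      obtain ⟨K, Θ₁, Θ₂, rfl, hrem⟩ := ih h
      exact ⟨K, p :: Θ₁, Θ₂, rfl, by simp [removeK, hpa, hrem]⟩

theorem keysOf_demote (K : Kind) (Θ : KEnv) (l : List TVar) :
    keysOf (demote K Θ l) = keysOf Θ := by
  cases K
  · simp only [demote, keysOf, List.map_map]
    exact List.map_congr_left fun p _ => by by_cases h : p.1 ∈ l <;> simp [h]
  · rfl

theorem length_demote (K : Kind) (Θ : KEnv) (l : List TVar) :
    (demote K Θ l).length = Θ.length := by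
  cases K <;> simp [demote]

theorem mem_demote_mono {Θ : KEnv} {l : List TVar} {q : TVar × Kind} :
    q ∈ demote .mono Θ l ↔ ∃ p ∈ Θ, (if p.1 ∈ l then (p.1, Kind.mono) else p) = q := by
  simp [demote]

theorem SubstWF.demote {Δ : List TVar} {θ : Subst} {Θ Θ₀ Θ' : KEnv} {K : Kind} {l : List TVar}
    (hθ : SubstWF Δ θ Θ Θ') (hsub : Θ₀ ⊆ Θ)
    (hl : K = .mono → ∀ v ∈ l, HasKind (dk Δ ++ Θ') (lookupSub θ v) .mono) :
    SubstWF Δ θ (demote K Θ₀ l) Θ' := by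
  refine ⟨fun q hq => ?_, hθ.2⟩
  cases K with
  | poly => exact hθ.1 q (hsub hq)
  | mono =>
    obtain ⟨p, hp, rfl⟩ := mem_demote_mono.1 hq
    by_cases hpl : p.1 ∈ l
    · simpa [hpl] using hl rfl p.1 hpl
    · simpa [hpl] using hθ.1 p (hsub hp)

theorem SubstWF.cons_rigid {Δ : List TVar} {θ : Subst} {Θ Θ' : KEnv} {c : TVar}
    (hθ : SubstWF Δ θ Θ Θ') (hc : c ∉ keysOf θ) : SubstWF (c :: Δ) θ Θ Θ' := by
  refine ⟨fun p hp => (hθ.1 p hp).of_env fun v _ K h => List.mem_cons_of_mem _ h, ?_⟩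
  simpa [lookupSub_of_not_mem hc] using hθ.2

/-! ### The invariant of the completeness proof -/

def ftvOn (θ : Subst) (l : List TVar) : List TVar := l.flatMap fun v => (lookupSub θ v).ftv

theorem mem_ftvOn {θ : Subst} {l : List TVar} {x : TVar} :
    x ∈ ftvOn θ l ↔ ∃ v ∈ l, x ∈ (lookupSub θ v).ftv := List.mem_flatMap

theorem not_mem_ftvOn {θ : Subst} {l : List TVar} {x : TVar} (hl : x ∉ l)
    (hθ : x ∉ ftvSubst θ) : x ∉ ftvOn θ l := by
  intro hx
  obtain ⟨v, hv, hxv⟩ := mem_ftvOn.1 hx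
  by_cases hvθ : v ∈ keysOf θ
  · exact hθ (ftv_lookupSub_subset hvθ hxv)
  · simp only [lookupSub_of_not_mem hvθ, ftv_tvar, List.mem_singleton] at hxv
    exact hl (hxv ▸ hv)

/-- `θ = θ'' ∘ θ'` on `Δ, Θ` up to α-equivalence, for a unifier `θ' : Θ ⇒ Θ''` and a witness
`θ'' : Θ'' ⇒ Θ'`. The escape check `c ∉ ftvSubst θ'` of the `∀` rule reads every entry of the
list `θ'`, shadowed ones included, hence the fields `entry_scoped` and `entry_ftv`. -/
structure Factorization (Δ : List TVar) (Θ Θ' : KEnv) (θ : Subst) (Θ'' : KEnv)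
    (θ' θ'' : Subst) : Prop where
  wf : SubstWF Δ θ'' Θ'' Θ'
  factor : ∀ v ∈ Δ ++ keysOf Θ,
    (lookupSub θ v).toDB [] = ((lookupSub θ' v).applySubst θ'').toDB []
  lookup_scoped : ∀ v ∈ Δ ++ keysOf Θ, (lookupSub θ' v).ftv ⊆ Δ ++ keysOf Θ''
  entry_scoped : ∀ p ∈ θ', p.2.ftv ⊆ Δ ++ keysOf Θ''
  entry_ftv : ∀ p ∈ θ', (p.2.applySubst θ'').ftv ⊆ ftvOn θ (keysOf Θ)
  witness_ftv : ftvOn θ'' (keysOf Θ'') ⊆ ftvOn θ (keysOf Θ)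
  progress : θ' = [] ∧ Θ'' = Θ ∨ Θ''.length < Θ.length

namespace Factorization

variable {Δ : List TVar} {Θ Θ' Θ'' : KEnv} {θ θ' θ'' : Subst}

theorem refl (hθ : SubstWF Δ θ Θ Θ') : Factorization Δ Θ Θ' θ Θ [] θ where
  wf := hθ
  factor v _ := by simp
  lookup_scoped v hv := by simpa using hv
  entry_scoped := by simp
  entry_ftv := by simp
  witness_ftv := List.Subset.refl _
  progress := Or.inl ⟨rfl, rfl⟩

theorem toDB_applySubst_eq (F : Factorization Δ Θ Θ' θ Θ'' θ' θ'') {C : Ty}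
    (hC : C.ftv ⊆ Δ ++ keysOf Θ) :
    (C.applySubst θ).toDB [] = ((C.applySubst θ').applySubst θ'').toDB [] := by
  rw [toDB_applySubst, toDB_applySubst, toDB_applySubst C θ', subst_subst]
  exact subst_congr fun v hv => by rw [F.factor v (hC (mem_fv_toDB_nil.1 hv)), toDB_applySubst]

theorem ftv_applySubst_subset (F : Factorization Δ Θ Θ' θ Θ'' θ' θ'') {C : Ty}
    (hC : C.ftv ⊆ Δ ++ keysOf Θ) : (C.applySubst θ').ftv ⊆ Δ ++ keysOf Θ'' := by
  intro x hx
  obtain ⟨v, hv, hxv⟩ := mem_ftv_applySubst.1 hx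
  exact F.lookup_scoped v (hC hv) hxv

theorem comp {Θ₁ Θ₂ : KEnv} {θ₁ σ₁ θ₂ σ₂ : Subst} (F₁ : Factorization Δ Θ Θ' θ Θ₁ θ₁ σ₁)
    (F₂ : Factorization Δ Θ₁ Θ' σ₁ Θ₂ θ₂ σ₂) :
    Factorization Δ Θ Θ' θ Θ₂ (compSubst θ₂ θ₁) σ₂ where
  wf := F₂.wf
  factor v hv := by
    rw [F₁.factor v hv, lookupSub_compSubst]
    exact F₂.toDB_applySubst_eq (F₁.lookup_scoped v hv)
  lookup_scoped v hv := by
    rw [lookupSub_compSubst]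
    exact F₂.ftv_applySubst_subset (F₁.lookup_scoped v hv)
  entry_scoped p hp := by
    rcases List.mem_append.1 hp with hp | hp
    · obtain ⟨q, hq, rfl⟩ := List.mem_map.1 hp
      exact F₂.ftv_applySubst_subset (F₁.entry_scoped q hq)
    · exact F₂.entry_scoped p hp
  entry_ftv p hp := by
    rcases List.mem_append.1 hp with hp | hp
    · obtain ⟨q, hq, rfl⟩ := List.mem_map.1 hp
      intro x hx
      exact F₁.entry_ftv q hq
        ((mem_ftv_of_toDB_eq (F₂.toDB_applySubst_eq (F₁.entry_scoped q hq))).2 hx)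
    · exact fun x hx => F₁.witness_ftv (F₂.entry_ftv p hp hx)
  witness_ftv x hx := F₁.witness_ftv (F₂.witness_ftv hx)
  progress := by
    rcases F₁.progress with ⟨rfl, rfl⟩ | h₁ <;> rcases F₂.progress with ⟨rfl, rfl⟩ | h₂
    · exact Or.inl ⟨rfl, rfl⟩
    all_goals exact Or.inr (by omega)

theorem not_mem_ftvSubst (F : Factorization Δ Θ Θ' θ Θ'' θ' θ'') {x : TVar}
    (hx : lookupSub θ'' x = .tvar x) (hxθ : x ∉ ftvOn θ (keysOf Θ)) : x ∉ ftvSubst θ' := by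
  intro h
  obtain ⟨p, hp, hxp⟩ := mem_ftvSubst.1 h
  exact hxθ (F.entry_ftv p hp (mem_ftv_applySubst.2 ⟨x, hxp, by simp [hx]⟩))

theorem of_cons_rigid {c : TVar} (F : Factorization (c :: Δ) Θ Θ' θ Θ'' θ' θ'')
    (hcΔ : c ∉ Δ) (hcΘ : c ∉ keysOf Θ) (hcθ : c ∉ ftvOn θ (keysOf Θ)) :
    Factorization Δ Θ Θ' θ Θ'' θ' θ'' := by
  have hentry : ∀ p ∈ θ', c ∉ p.2.ftv := fun p hp hc =>
    F.not_mem_ftvSubst (F.wf.2 c List.mem_cons_self) hcθ (mem_ftvSubst.2 ⟨p, hp, hc⟩)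
  have drop : ∀ {l : List TVar}, l ⊆ (c :: Δ) ++ keysOf Θ'' → c ∉ l → l ⊆ Δ ++ keysOf Θ'' :=
    fun hl hc x hx => (List.mem_cons.1 (hl hx)).resolve_left fun e => hc (e ▸ hx)
  refine ⟨⟨fun p hp => ?_, fun v hv => F.wf.2 v (List.mem_cons_of_mem _ hv)⟩,
    fun v hv => F.factor v (List.mem_cons_of_mem _ hv), fun v hv => ?_,
    fun p hp => drop (F.entry_scoped p hp) (hentry p hp), F.entry_ftv, F.witness_ftv, F.progress⟩
  · refine (F.wf.1 p hp).of_env fun v hv K hmem => (List.mem_cons.1 hmem).resolve_left ?_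
    intro he
    have hvc : v = c := congrArg Prod.fst he
    exact hcθ (F.witness_ftv (mem_ftvOn.2 ⟨p.1, List.mem_map_of_mem hp, hvc ▸ hv⟩))
  · refine drop (F.lookup_scoped v (List.mem_cons_of_mem _ hv)) ?_
    by_cases hvθ : v ∈ keysOf θ'
    · exact hentry _ (lookupSub_mem hvθ)
    · rw [lookupSub_of_not_mem hvθ, ftv_tvar, List.mem_singleton]
      rintro rfl
      simp only [List.mem_append] at hv
      exact hv.elim hcΔ hcΘ

end Factorization

/-! ### Binding a flexible variable -/

section Flex

variable {Δ : List TVar} {Θ₁ Θ₂ Θ' : KEnv} {θ : Subst} {a : TVar} {K : Kind} {B : Ty}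

theorem subset_keysOf_erase {l : List TVar} (hl : l ⊆ Δ ++ keysOf (Θ₁ ++ (a, K) :: Θ₂))
    (ha : a ∉ l) : l ⊆ Δ ++ keysOf (Θ₁ ++ Θ₂) := by
  intro x hx
  have := hl hx
  have hxa : x ≠ a := fun h => ha (h ▸ hx)
  simp_all [keysOf]

theorem hasKind_applySubst_of_flex (hθ : SubstWF Δ θ (Θ₁ ++ (a, K) :: Θ₂) Θ')
    (heq : (lookupSub θ a).toDB [] = (B.applySubst θ).toDB []) :
    HasKind (dk Δ ++ Θ') (B.applySubst θ) K :=
  (hθ.1 (a, K) (by simp)).of_toDB_eq heq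

theorem hasKind_flex (hθ : SubstWF Δ θ (Θ₁ ++ (a, K) :: Θ₂) Θ')
    (hB : B.ftv ⊆ Δ ++ keysOf (Θ₁ ++ (a, K) :: Θ₂)) (haB : a ∉ B.ftv)
    (heq : (lookupSub θ a).toDB [] = (B.applySubst θ).toDB []) :
    HasKind (dk Δ ++ demote K (Θ₁ ++ Θ₂) (listDiff B.ftv Δ)) B K := by
  have hB' := subset_keysOf_erase hB haB
  cases K with
  | poly => exact hasKind_poly_iff.2 (by simpa [keysOf_demote] using hB')
  | mono =>
    have hmono := (hasKind_mono_iff.1 (hasKind_applySubst_of_flex hθ heq)).1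
    refine hasKind_mono_iff.2 ⟨(isMonoB_applySubst.1 hmono).1, fun v hv => ?_⟩
    by_cases hvΔ : v ∈ Δ
    · exact List.mem_append_left _ (List.mem_map_of_mem hvΔ)
    · obtain ⟨p, hp, rfl⟩ := List.mem_map.1 ((List.mem_append.1 (hB' hv)).resolve_left hvΔ)
      exact List.mem_append_right _ (mem_demote_mono.2 ⟨p, hp, by simp [mem_listDiff, hv, hvΔ]⟩)

theorem Factorization.flex (hθ : SubstWF Δ θ (Θ₁ ++ (a, K) :: Θ₂) Θ')
    (hB : B.ftv ⊆ Δ ++ keysOf (Θ₁ ++ (a, K) :: Θ₂)) (haB : a ∉ B.ftv)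
    (heq : (lookupSub θ a).toDB [] = (B.applySubst θ).toDB []) :
    Factorization Δ (Θ₁ ++ (a, K) :: Θ₂) Θ' θ (demote K (Θ₁ ++ Θ₂) (listDiff B.ftv Δ))
      [(a, B)] θ where
  wf := hθ.demote (fun p => by simp; tauto) fun hK v hv => by
    subst hK; exact (hasKind_applySubst_of_flex hθ heq).mono_of_applySubst (mem_listDiff.1 hv).1
  factor v _ := by
    by_cases hav : a = v
    · subst hav; simpa using heq
    · simp [hav]
  lookup_scoped v hv := by
    rw [keysOf_demote]
    by_cases hav : a = v
    · subst hav; simpa using subset_keysOf_erase hB haB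
    · simpa [hav] using
        subset_keysOf_erase (l := [v]) (K := K) (by simpa using hv) (by simpa using hav)
  entry_scoped p hp := by
    rw [List.mem_singleton.1 hp, keysOf_demote]
    exact subset_keysOf_erase hB haB
  entry_ftv p hp x hx := by
    rw [List.mem_singleton.1 hp] at hx
    exact mem_ftvOn.2 ⟨a, by simp, (mem_ftv_of_toDB_eq heq).2 hx⟩
  witness_ftv x hx := by
    obtain ⟨v, hv, hxv⟩ := mem_ftvOn.1 hx
    rw [keysOf_demote] at hv
    refine mem_ftvOn.2 ⟨v, ?_, hxv⟩
    simp only [keysOf, List.map_append, List.map_cons, List.mem_append, List.mem_cons] at hv ⊢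
    tauto
  progress := Or.inr (by simp [length_demote])

end Flex

section Cases

variable {Δ : List TVar} {Θ Θ' : KEnv} {θ : Subst}

theorem exists_flex_solution {a : TVar} {B : Ty} (hθ : SubstWF Δ θ Θ Θ') (ha : a ∈ keysOf Θ)
    (hB : B.ftv ⊆ Δ ++ keysOf Θ) (hBa : B ≠ .tvar a)
    (heq : (lookupSub θ a).toDB [] = (B.applySubst θ).toDB []) :
    ∃ K Θ₀, removeK Θ a = some (K, Θ₀) ∧
      HasKind (dk Δ ++ demote K Θ₀ (listDiff B.ftv Δ)) B K ∧
      Factorization Δ Θ Θ' θ (demote K Θ₀ (listDiff B.ftv Δ)) [(a, B)] θ := by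
  obtain ⟨K, Θ₁, Θ₂, rfl, hrem⟩ := removeK_eq_some_of_mem ha
  have haB := not_mem_ftv_of_toDB_eq hBa heq
  exact ⟨K, _, hrem, hasKind_flex hθ hB haB heq, Factorization.flex hθ hB haB heq⟩

theorem unifyRel_tvar_left_complete {a : TVar} {B : Ty} (hθ : SubstWF Δ θ Θ Θ')
    (ha : a ∈ Δ ++ keysOf Θ) (hB : B.ftv ⊆ Δ ++ keysOf Θ) (hBa : B ≠ .tvar a)
    (heq : (lookupSub θ a).toDB [] = (B.applySubst θ).toDB []) :
    ∃ Θ'' θ', UnifyRel Δ Θ (.tvar a) B Θ'' θ' ∧ ∃ θ'', Factorization Δ Θ Θ' θ Θ'' θ' θ'' := by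
  by_cases haΔ : a ∈ Δ
  · -- `a` is rigid, so `B` is a flexible variable that `θ` maps to `a`
    have hBθ : B.applySubst θ = .tvar a :=
      eq_tvar_of_toDB_eq_fvar (by rw [← heq, hθ.2 a haΔ]; simp)
    obtain ⟨b, rfl⟩ : ∃ b, B = .tvar b := by
      cases B <;> simp_all [applySubst_all]
    have hbΔ : b ∉ Δ := fun hb => hBa (by simpa [hθ.2 b hb] using hBθ)
    have hab : Ty.tvar a ≠ .tvar b := fun h => hBa h.symm
    obtain ⟨K, Θ₀, hrem, hK, F⟩ := exists_flex_solution hθ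
      ((List.mem_append.1 (hB (by simp))).resolve_left hbΔ) (by simpa using ha) hab
      (by rw [applySubst_tvar] at hBθ; rw [hBθ, applySubst_tvar, hθ.2 a haΔ])
    exact ⟨_, _, .flexR hab hrem rfl hK, θ, F⟩
  · obtain ⟨K, Θ₀, hrem, hK, F⟩ :=
      exists_flex_solution hθ ((List.mem_append.1 ha).resolve_left haΔ) hB hBa heq
    exact ⟨_, _, .flexL hBa hrem rfl hK, θ, F⟩

theorem unifyRel_tvar_right_complete {A : Ty} {b : TVar} (hθ : SubstWF Δ θ Θ Θ')
    (hA : A.ftv ⊆ Δ ++ keysOf Θ) (hAv : ∀ v, A ≠ .tvar v) (hb : b ∈ Δ ++ keysOf Θ)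
    (heq : (A.applySubst θ).toDB [] = (lookupSub θ b).toDB []) :
    ∃ Θ'' θ', UnifyRel Δ Θ A (.tvar b) Θ'' θ' ∧ ∃ θ'', Factorization Δ Θ Θ' θ Θ'' θ' θ'' := by
  have hbΔ : b ∉ Δ := by
    intro hbΔ
    have := eq_tvar_of_toDB_eq_fvar (A := A.applySubst θ) (v := b) (by rw [heq, hθ.2 b hbΔ]; simp)
    cases A <;> simp_all [applySubst_all]
  obtain ⟨K, Θ₀, hrem, hK, F⟩ :=
    exists_flex_solution hθ ((List.mem_append.1 hb).resolve_left hbΔ) hA (hAv b) heq.symm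
  exact ⟨_, _, .flexR (hAv b) hrem rfl hK, θ, F⟩

theorem toDB_rename_eq_of_toDB_all_eq {a b c : TVar} {A B : Ty} (hθc : lookupSub θ c = .tvar c)
    (h : ((Ty.all a A).applySubst θ).toDB [] = ((Ty.all b B).applySubst θ).toDB []) :
    ((A.applySubst [(a, .tvar c)]).applySubst θ).toDB [] =
      ((B.applySubst [(b, .tvar c)]).applySubst θ).toDB [] := by
  rw [toDB_applySubst, toDB_applySubst] at h
  simp only [Ty.toDB, subst, DB.all.injEq] at h
  rw [toDB_rename_applySubst hθc, toDB_rename_applySubst hθc, h]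

end Cases

/-! ### Completeness -/

mutual

theorem unifyRel_complete {Δ : List TVar} {Θ Θ' : KEnv} {θ : Subst} {A B : Ty}
    (hθ : SubstWF Δ θ Θ Θ') (hA : A.ftv ⊆ Δ ++ keysOf Θ) (hB : B.ftv ⊆ Δ ++ keysOf Θ)
    (heq : (A.applySubst θ).toDB [] = (B.applySubst θ).toDB []) :
    ∃ Θ'' θ', UnifyRel Δ Θ A B Θ'' θ' ∧ ∃ θ'', Factorization Δ Θ Θ' θ Θ'' θ' θ'' := by
  match A, B with
  | .tvar a, B =>
    if hBa : B = .tvar a then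
      subst hBa
      exact ⟨Θ, [], .refl, θ, .refl hθ⟩
    else
      exact unifyRel_tvar_left_complete hθ (hA (by simp)) hB hBa (by simpa using heq)
  | .con d args, .tvar b =>
    exact unifyRel_tvar_right_complete hθ hA (by simp) (hB (by simp)) (by simpa using heq)
  | .all a A, .tvar b =>
    exact unifyRel_tvar_right_complete hθ hA (by simp) (hB (by simp)) (by simpa using heq)
  | .con d args, .con d' args' =>
    simp only [applySubst_con, Ty.toDB, List.map_map, DB.con.injEq] at heq
    obtain ⟨rfl, hargs⟩ := heq
    obtain ⟨Θ'', θ', hU, θ'', F⟩ := unifyList_complete hθ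
      (fun C hC x hx => hA (mem_ftv_con.2 ⟨C, hC, hx⟩))
      (fun C hC x hx => hB (mem_ftv_con.2 ⟨C, hC, hx⟩)) hargs
    exact ⟨Θ'', θ', .con hU, θ'', F⟩
  | .con _ _, .all _ _ | .all _ _, .con _ _ => simp [applySubst_all] at heq
  | .all a A, .all b B =>
    obtain ⟨c, hc⟩ : ∃ c, c ∉ Δ ++ keysOf Θ ++ keysOf θ ++ ftvSubst θ ++ A.ftv ++ B.ftv :=
      ⟨_, freshFor_not_mem _⟩
    simp only [List.mem_append, not_or] at hc
    obtain ⟨⟨⟨⟨⟨hcΔ, hcΘ⟩, hcθ⟩, hcθ'⟩, hcA⟩, hcB⟩ := hc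
    have hcθΘ : c ∉ ftvOn θ (keysOf Θ) := not_mem_ftvOn hcΘ hcθ'
    obtain ⟨Θ'', θ', hU, θ'', F⟩ := unifyRel_complete (hθ.cons_rigid hcθ)
      (fun x hx => List.cons_subset_cons c hA (ftv_rename_subset A a c hx))
      (fun x hx => List.cons_subset_cons c hB (ftv_rename_subset B b c hx))
      (toDB_rename_eq_of_toDB_all_eq (lookupSub_of_not_mem hcθ) heq)
    refine ⟨Θ'', θ', .all c hcΔ hcΘ (fun h => hcA (mem_ftv_all.1 h).1)
      (fun h => hcB (mem_ftv_all.1 h).1) hU ?_, θ'', F.of_cons_rigid hcΔ hcΘ hcθΘ⟩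
    exact F.not_mem_ftvSubst (F.wf.2 c List.mem_cons_self) hcθΘ
termination_by (Θ.length, (A.toDB []).size + (B.toDB []).size, 1)
decreasing_by
  all_goals simp only [Prod.lex_def, true_and]
  · simp only [Ty.toDB, DB.size, List.map_map, Function.comp_def]
    omega
  · simp only [size_toDB_rename, Ty.toDB, DB.size]
    omega

theorem unifyList_complete {Δ : List TVar} {Θ Θ' : KEnv} {θ : Subst} {As Bs : List Ty}
    (hθ : SubstWF Δ θ Θ Θ') (hAs : ∀ A ∈ As, A.ftv ⊆ Δ ++ keysOf Θ)
    (hBs : ∀ B ∈ Bs, B.ftv ⊆ Δ ++ keysOf Θ)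
    (heq : As.map (fun A => (A.applySubst θ).toDB []) =
      Bs.map (fun B => (B.applySubst θ).toDB [])) :
    ∃ Θ'' θ', UnifyList Δ Θ As Bs Θ'' θ' ∧ ∃ θ'', Factorization Δ Θ Θ' θ Θ'' θ' θ'' := by
  match As, Bs with
  | [], [] => exact ⟨Θ, [], .nil, θ, .refl hθ⟩
  | [], _ :: _ | _ :: _, [] => simp at heq
  | A :: As, B :: Bs =>
    simp only [List.map_cons, List.cons.injEq] at heq
    obtain ⟨Θ₁, θ₁, hU₁, σ₁, F₁⟩ :=
      unifyRel_complete hθ (hAs A List.mem_cons_self) (hBs B List.mem_cons_self) heq.1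
    have hscoped : ∀ {Cs : List Ty}, (∀ C ∈ Cs, C.ftv ⊆ Δ ++ keysOf Θ) →
        ∀ C ∈ Cs.map (·.applySubst θ₁), C.ftv ⊆ Δ ++ keysOf Θ₁ := by
      intro Cs hCs _ hC
      obtain ⟨C, hmem, rfl⟩ := List.mem_map.1 hC
      exact F₁.ftv_applySubst_subset (hCs C hmem)
    have heq' : (As.map (·.applySubst θ₁)).map (fun C => (C.applySubst σ₁).toDB []) =
        (Bs.map (·.applySubst θ₁)).map (fun C => (C.applySubst σ₁).toDB []) := by
      simp only [List.map_map, Function.comp_def]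
      rw [← List.map_congr_left fun C hC =>
          F₁.toDB_applySubst_eq (hAs C (List.mem_cons_of_mem _ hC)),
        ← List.map_congr_left fun C hC =>
          F₁.toDB_applySubst_eq (hBs C (List.mem_cons_of_mem _ hC))]
      exact heq.2
    obtain ⟨Θ₂, θ₂, hU₂, σ₂, F₂⟩ := unifyList_complete F₁.wf
      (hscoped fun C hC => hAs C (List.mem_cons_of_mem _ hC))
      (hscoped fun C hC => hBs C (List.mem_cons_of_mem _ hC)) heq'
    exact ⟨Θ₂, compSubst θ₂ θ₁, .cons hU₁ hU₂, σ₂, F₁.comp F₂⟩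
-- The last component puts a list problem above the problem of its heads, which can be as large.
termination_by
  (Θ.length, (As.map fun A => (A.toDB []).size).sum + (Bs.map fun B => (B.toDB []).size).sum, 2)
decreasing_by
  · simp only [Prod.lex_def, true_and, List.map_cons, List.sum_cons]
    omega
  · have hApos := size_pos (A.toDB [])
    simp only [Prod.lex_def, List.map_cons, List.sum_cons, List.map_map, Function.comp_def]
    rcases F₁.progress with ⟨rfl, rfl⟩ | hlt
    · simp only [toDB_applySubst_nil, true_and]
      omega
    · exact Or.inl hlt

end

/-- completeness and most-generality of unification. -/
theorem unify_complete {Δ : List TVar} {Θ Θ' : KEnv} {A B : Ty} {K : Kind} {θ : Subst}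
    (hθ : SubstWF Δ θ Θ Θ')
    (hA : HasKind (dk Δ ++ Θ) A K) (hB : HasKind (dk Δ ++ Θ) B K)
    (heq : Aeq (A.applySubst θ) (B.applySubst θ)) :
    ∃ Θ'' θ', UnifyRel Δ Θ A B Θ'' θ' ∧
      ∃ θ'', SubstWF Δ θ'' Θ'' Θ' ∧
        ∀ a ∈ Θ.map Prod.fst,
          Aeq (lookupSub θ a) ((lookupSub θ' a).applySubst θ'') := by
  have hscope : ∀ {C : Ty}, HasKind (dk Δ ++ Θ) C K → C.ftv ⊆ Δ ++ keysOf Θ := fun hC =>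
    by simpa using hC.ftv_subset
  obtain ⟨Θ'', θ', hU, θ'', F⟩ :=
    unifyRel_complete hθ (hscope hA) (hscope hB) (toDB_eq_of_aeq heq)
  exact ⟨Θ'', θ', hU, θ'', F.wf,
    fun a ha => aeq_of_toDB_eq (F.factor a (List.mem_append_right _ ha))⟩

end FreezeML
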